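/- arXiv:1608.05056 — 5 statements merged into one kernel-verified Lean document; each statement's English description precedes it below -/
import Mathlib

section
/- The ℚ-algebra automorphism σ of K = ℚ(a,b,c,d,e,f) determined by the simultaneous exchanges a↔e, b↔f, c↔d fixes each of the six line coordinates s_1, t_1, s_2, t_2, s_3, t_3 of the Pascal lines ℓ_1, ℓ_2, ℓ_3. -/
noncomputable section

/-- `K = ℚ(a,b,c,d,e,f)`, the field of rational functions in six variables over ℚ. -/
abbrev RatField : Type := FractionRing (MvPolynomial (Fin 6) ℚ)

/-- The six independent variables `a, b, c, d, e, f` (indexed `0,…,5`) as elements of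
`ℚ(a,…,f)`. -/
def var (i : Fin 6) : RatField :=
  algebraMap (MvPolynomial (Fin 6) ℚ) RatField (MvPolynomial.X i)

/-- The point `[1, p, p²]` of the conic `z1² = z0·z2`, in homogeneous coordinates. -/
def conicPt (p : RatField) : Fin 3 → RatField := ![1, p, p ^ 2]

/-- Cross product of coordinate vectors: the coordinates of the join of two points, or of
the intersection of two lines. -/
def cross (u v : Fin 3 → RatField) : Fin 3 → RatField :=
  ![u 1 * v 2 - u 2 * v 1, u 2 * v 0 - u 0 * v 2, u 0 * v 1 - u 1 * v 0]

/-- The homogeneous coordinate vector of the Pascal line of the array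
`[P1 P2 P3; Q1 Q2 Q3]` of points of the conic with parameters `p1, p2, p3, q1, q2, q3`:
the line through the (collinear) points `P1Q2 ∩ P2Q1`, `P2Q3 ∩ P3Q2`, `P1Q3 ∩ P3Q1`,
computed as the join of the first two of them. -/
def pascalVec (p1 p2 p3 q1 q2 q3 : RatField) : Fin 3 → RatField :=
  cross
    (cross (cross (conicPt p1) (conicPt q2)) (cross (conicPt p2) (conicPt q1)))
    (cross (cross (conicPt p2) (conicPt q3)) (cross (conicPt p3) (conicPt q2)))

/-- The coordinate `s` of a line with coordinates `⟨1, s, t⟩`, i.e. the line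
`z0 + s·z1 + t·z2 = 0`. -/
def sCoord (l : Fin 3 → RatField) : RatField := l 1 / l 0

/-- The coordinate `t` of a line with coordinates `⟨1, s, t⟩`, i.e. the line
`z0 + s·z1 + t·z2 = 0`. -/
def tCoord (l : Fin 3 → RatField) : RatField := l 2 / l 0

/-- The Pascal `ℓ₁` of the array `[A D B; E C F]`. -/
def line1 : Fin 3 → RatField := pascalVec (var 0) (var 3) (var 1) (var 4) (var 2) (var 5)

/-- The Pascal `ℓ₂` of the array `[A C F; E D B]`. -/
def line2 : Fin 3 → RatField := pascalVec (var 0) (var 2) (var 5) (var 4) (var 3) (var 1)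

/-- The Pascal `ℓ₃` of the array `[A D F; E C B]`. -/
def line3 : Fin 3 → RatField := pascalVec (var 0) (var 3) (var 5) (var 4) (var 2) (var 1)

/-- The Pascal `ℓ⋆` of the array `[A B C; F D E]`. -/
def lineStar : Fin 3 → RatField :=
  pascalVec (var 0) (var 1) (var 2) (var 5) (var 3) (var 4)

/-!
σ is a ring automorphism, so it commutes with the cross-product formulas, and it exchanges the
two rows of each of the three arrays: it maps each computed Pascal vector to the one of the
row-exchanged array. That vector is the same, since by antisymmetry of the cross product the
exchange negates both points `P₁Q₂ ∩ P₂Q₁`, `P₂Q₃ ∩ P₃Q₂` whose join is taken, and the join of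
two negated points is unchanged.
-/

open Matrix in
theorem cross_eq_crossProduct (u v : Fin 3 → RatField) : cross u v = u ⨯₃ v :=
  (cross_apply u v).symm

theorem cross_neg_neg (u v : Fin 3 → RatField) : cross (-u) (-v) = cross u v := by
  simp only [cross_eq_crossProduct, map_neg, LinearMap.neg_apply, neg_neg]

theorem cross_swap (u v : Fin 3 → RatField) : cross v u = -cross u v := by
  simp only [cross_eq_crossProduct, cross_anticomm]

theorem pascalVec_swap_rows (p1 p2 p3 q1 q2 q3 : RatField) :
    pascalVec q1 q2 q3 p1 p2 p3 = pascalVec p1 p2 p3 q1 q2 q3 := by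
  unfold pascalVec
  rw [cross_swap (conicPt p2) (conicPt q1), cross_swap (conicPt p1) (conicPt q2),
    cross_swap (conicPt p3) (conicPt q2), cross_swap (conicPt p2) (conicPt q3),
    cross_neg_neg, cross_neg_neg, cross_swap (cross (conicPt p1) (conicPt q2)),
    cross_swap (cross (conicPt p2) (conicPt q3)), cross_neg_neg]

section

variable {F : Type*} [FunLike F RatField RatField] [RingHomClass F RatField RatField] (σ : F)

theorem map_cross (u v : Fin 3 → RatField) : σ ∘ cross u v = cross (σ ∘ u) (σ ∘ v) := by
  ext i
  fin_cases i <;> simp [cross]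

theorem map_conicPt (p : RatField) : σ ∘ conicPt p = conicPt (σ p) := by
  ext i
  fin_cases i <;> simp [conicPt]

theorem map_pascalVec (p1 p2 p3 q1 q2 q3 : RatField) :
    σ ∘ pascalVec p1 p2 p3 q1 q2 q3 = pascalVec (σ p1) (σ p2) (σ p3) (σ q1) (σ q2) (σ q3) := by
  simp only [pascalVec, map_cross, map_conicPt]

theorem map_sCoord (l : Fin 3 → RatField) : σ (sCoord l) = sCoord (σ ∘ l) :=
  map_div₀ σ _ _

theorem map_tCoord (l : Fin 3 → RatField) : σ (tCoord l) = tCoord (σ ∘ l) :=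
  map_div₀ σ _ _

theorem map_pascalVec_of_swap_rows {p1 p2 p3 q1 q2 q3 : RatField}
    (h1 : σ p1 = q1) (h2 : σ p2 = q2) (h3 : σ p3 = q3)
    (h1' : σ q1 = p1) (h2' : σ q2 = p2) (h3' : σ q3 = p3) :
    σ ∘ pascalVec p1 p2 p3 q1 q2 q3 = pascalVec p1 p2 p3 q1 q2 q3 := by
  rw [map_pascalVec, h1, h2, h3, h1', h2', h3', pascalVec_swap_rows]

end

/-- The (ℚ-algebra) automorphism `σ` of `K = ℚ(a,…,f)` determined by the simultaneous
exchanges `a↔e`, `b↔f`, `c↔d` fixes each of the six line coordinates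
`s₁, t₁, s₂, t₂, s₃, t₃` of the Pascal lines `ℓ₁, ℓ₂, ℓ₃`.  (Any ring automorphism of
`K` is automatically a ℚ-algebra automorphism, and is determined by its values on the
generators `a, …, f`.) -/
theorem pascal_stmt_2 (σ : RatField ≃+* RatField)
    (hae : σ (var 0) = var 4) (hea : σ (var 4) = var 0)
    (hbf : σ (var 1) = var 5) (hfb : σ (var 5) = var 1)
    (hcd : σ (var 2) = var 3) (hdc : σ (var 3) = var 2) :
    σ (sCoord line1) = sCoord line1 ∧ σ (tCoord line1) = tCoord line1 ∧
      σ (sCoord line2) = sCoord line2 ∧ σ (tCoord line2) = tCoord line2 ∧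
      σ (sCoord line3) = sCoord line3 ∧ σ (tCoord line3) = tCoord line3 := by
  have fixes_coords : ∀ l, σ ∘ l = l → σ (sCoord l) = sCoord l ∧ σ (tCoord l) = tCoord l :=
    fun l hl => ⟨by rw [map_sCoord, hl], by rw [map_tCoord, hl]⟩
  obtain ⟨hs₁, ht₁⟩ := fixes_coords line1 (map_pascalVec_of_swap_rows σ hae hdc hbf hea hcd hfb)
  obtain ⟨hs₂, ht₂⟩ := fixes_coords line2 (map_pascalVec_of_swap_rows σ hae hcd hfb hea hdc hbf)
  obtain ⟨hs₃, ht₃⟩ := fixes_coords line3 (map_pascalVec_of_swap_rows σ hae hdc hfb hea hcd hbf)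
  exact ⟨hs₁, ht₁, hs₂, ht₂, hs₃, ht₃⟩

end
end

section
/- For arbitrary quadratic binary forms U, V, W over a field of characteristic zero, ψ(U,V,W) = 3·[ (U,V)_2·W + (U,W)_2·V − (V,W)_2·U ], where ψ(U,V,W) = 6·(U, V·W)_2 − U·(V,W)_2. -/
/-! The second transvectant is a multiple of `Ω²(G, H) = G₁₁H₂₂ - 2G₁₂H₁₂ + G₂₂H₁₁` (subscripts
denoting partial derivatives). Leibniz' rule splits `Ω²(U, VW)` as
`Ω²(U, V) W + Ω²(U, W) V + 2E`, where `E` is the cross term in which `V` and `W` are each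
differentiated once. For quadratic forms the second derivatives are constants, and comparing the
nine coefficients gives `E = Ω²(U, V) W + Ω²(U, W) V - Ω²(V, W) U`. Since
`(·,·)₂ = Ω²/4` on pairs of quadratics and `(U, ·)₂ = Ω²/24` against a quartic, the identity
follows. -/

open MvPolynomial

/-- The `r`-th transvectant of binary forms `G`, `H` of degrees `m`, `n`:
`(G,H)_r = ((m−r)!(n−r)!)/(m!·n!) · Σ_{i=0}^{r} (−1)^i·C(r,i)·
  (∂^r G/∂x1^{r−i}∂x2^{i})·(∂^r H/∂x1^{i}∂x2^{r−i})`. -/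
noncomputable def transvectant {k : Type*} [Field k] (m n r : ℕ)
    (G H : MvPolynomial (Fin 2) k) : MvPolynomial (Fin 2) k :=
  C ((((m - r).factorial * (n - r).factorial : ℕ) : k) /
      ((m.factorial * n.factorial : ℕ) : k)) *
    ∑ i ∈ Finset.range (r + 1),
      C ((-1 : k) ^ i * (r.choose i : k)) *
        ((fun p => pderiv (0 : Fin 2) p)^[r - i]
            ((fun p => pderiv (1 : Fin 2) p)^[i] G) *
          (fun p => pderiv (0 : Fin 2) p)^[i]
            ((fun p => pderiv (1 : Fin 2) p)^[r - i] H))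

theorem MvPolynomial.IsHomogeneous.exists_eq_binaryQuadratic {S : Type*} [CommSemiring S]
    {P : MvPolynomial (Fin 2) S} (hP : P.IsHomogeneous 2) :
    ∃ a b c : S, P = C a * X 0 ^ 2 + C b * (X 0 * X 1) + C c * X 1 ^ 2 := by
  refine ⟨coeff (.single 0 2) P, coeff (.single 0 1 + .single 1 1) P, coeff (.single 1 2) P, ?_⟩
  ext m
  obtain ⟨p, q, rfl⟩ : ∃ p q, m = .single 0 p + .single 1 q :=
    ⟨m 0, m 1, by ext i; fin_cases i <;> simp⟩
  have hext : ∀ n : Fin 2 →₀ ℕ, n = .single 0 p + .single 1 q ↔ n 0 = p ∧ n 1 = q := fun n => by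
    simp [Finsupp.ext_iff, Fin.forall_fin_two]
  simp only [X, monomial_pow, monomial_mul, C_mul_monomial, coeff_add, coeff_monomial, hext,
    Finsupp.smul_single, smul_eq_mul, mul_one, one_pow, Finsupp.coe_add, Pi.add_apply,
    Finsupp.single_eq_same, Finsupp.single_eq_of_ne, ne_eq, one_ne_zero, zero_ne_one,
    not_false_eq_true, add_zero, zero_add]
  by_cases hdeg : p + q = 2
  · obtain ⟨rfl, rfl⟩ | ⟨rfl, rfl⟩ | ⟨rfl, rfl⟩ : p = 2 ∧ q = 0 ∨ p = 1 ∧ q = 1 ∨ p = 0 ∧ q = 2 := by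
      omega
    all_goals simp
  · rw [hP.coeff_eq_zero (by simpa [Finsupp.degree_eq_sum] using hdeg)]
    split_ifs <;> first | omega | simp

section OmegaProcess

variable {R : Type*} [CommRing R]

/-- Cayley's `Ω`-process applied twice to `G(x) H(y)`, followed by `y = x`. -/
noncomputable def omegaSq (G H : MvPolynomial (Fin 2) R) : MvPolynomial (Fin 2) R :=
  pderiv 0 (pderiv 0 G) * pderiv 1 (pderiv 1 H)
    - 2 * (pderiv 0 (pderiv 1 G) * pderiv 0 (pderiv 1 H))
    + pderiv 1 (pderiv 1 G) * pderiv 0 (pderiv 0 H)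

noncomputable def omegaSqCross (U V W : MvPolynomial (Fin 2) R) : MvPolynomial (Fin 2) R :=
  pderiv 0 (pderiv 0 U) * (pderiv 1 V * pderiv 1 W)
    - pderiv 0 (pderiv 1 U) * (pderiv 0 V * pderiv 1 W + pderiv 1 V * pderiv 0 W)
    + pderiv 1 (pderiv 1 U) * (pderiv 0 V * pderiv 0 W)

theorem omegaSq_mul_right (U V W : MvPolynomial (Fin 2) R) :
    omegaSq U (V * W) = omegaSq U V * W + omegaSq U W * V + 2 * omegaSqCross U V W := by
  simp only [omegaSq, omegaSqCross, pderiv_mul, map_add]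
  ring

theorem omegaSqCross_of_isHomogeneous {U V W : MvPolynomial (Fin 2) R}
    (hU : U.IsHomogeneous 2) (hV : V.IsHomogeneous 2) (hW : W.IsHomogeneous 2) :
    omegaSqCross U V W = omegaSq U V * W + omegaSq U W * V - omegaSq V W * U := by
  obtain ⟨a, b, c, rfl⟩ := hU.exists_eq_binaryQuadratic
  obtain ⟨d, e, f, rfl⟩ := hV.exists_eq_binaryQuadratic
  obtain ⟨g, h, i, rfl⟩ := hW.exists_eq_binaryQuadratic
  simp [omegaSq, omegaSqCross, pderiv_X, sq]
  ring

end OmegaProcess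

theorem transvectant_two_eq {k : Type*} [Field k] (m n : ℕ) (G H : MvPolynomial (Fin 2) k) :
    transvectant m n 2 G H =
      C ((((m - 2).factorial * (n - 2).factorial : ℕ) : k) /
        ((m.factorial * n.factorial : ℕ) : k)) * omegaSq G H := by
  rw [transvectant]
  congr 1
  simp [omegaSq, Finset.sum_range_succ]
  ring

/-- For arbitrary quadratic binary forms `U, V, W` over a field of characteristic zero,
`ψ(U,V,W) = 3·[(U,V)_2·W + (U,W)_2·V − (V,W)_2·U]`, where
`ψ(U,V,W) = 6·(U,V·W)_2 − U·(V,W)_2`. -/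
theorem pascal_stmt_8 {k : Type*} [Field k] [CharZero k]
    (U V W : MvPolynomial (Fin 2) k)
    (hU : U.IsHomogeneous 2) (hV : V.IsHomogeneous 2) (hW : W.IsHomogeneous 2) :
    C (6 : k) * transvectant 2 4 2 U (V * W) - U * transvectant 2 2 2 V W =
      C (3 : k) * (transvectant 2 2 2 U V * W + transvectant 2 2 2 U W * V -
        transvectant 2 2 2 V W * U) := by
  -- after the expansions, all that is left to check is `6 / 24 = 1 / 4`
  have h : (6 : MvPolynomial (Fin 2) k) * C (1 / 24) = C (1 / 4) := by
    rw [← map_ofNat C, ← map_mul]; norm_num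
  simp only [transvectant_two_eq, omegaSq_mul_right, omegaSqCross_of_isHomogeneous hU hV hW,
    map_ofNat]
  norm_num [Nat.factorial]
  linear_combination (3 * (omegaSq U V * W + omegaSq U W * V) - 2 * omegaSq V W * U) * h
end

section
/- For arbitrary linear binary forms α_x, β_x, γ_x, δ_x over a field of characteristic zero, (α_x·β_x, γ_x·δ_x)_1 = (1/2)·(αγ)·β_x·δ_x + (1/2)·(βδ)·α_x·γ_x. -/
/-!
The first transvectant of two quadratics is a quarter of their Jacobian
`J(G, H) = ∂₁G ∂₂H - ∂₂G ∂₁H`. The Jacobian is a derivation in each argument and sends two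
linear forms to their bracket, so `J(α_x β_x, γ_x δ_x)` expands into four bracket terms.
The syzygy `(αβ)γ_x - (αγ)β_x + (βγ)α_x = 0` shows that the two mixed terms
`(αδ)β_xγ_x + (βγ)α_xδ_x` equal the two others, which doubles them.
-/

open MvPolynomial

noncomputable def linForm {k : Type*} [Field k] (u1 u2 : k) : MvPolynomial (Fin 2) k :=
  C u1 * X 0 + C u2 * X 1

section Jacobian

variable {R : Type*} [CommRing R]

noncomputable def jacobian (G H : MvPolynomial (Fin 2) R) : MvPolynomial (Fin 2) R :=
  pderiv 0 G * pderiv 1 H - pderiv 1 G * pderiv 0 H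

theorem jacobian_mul_left (F G H : MvPolynomial (Fin 2) R) :
    jacobian (F * G) H = F * jacobian G H + G * jacobian F H := by
  simp only [jacobian, Derivation.leibniz, smul_eq_mul]
  ring

theorem jacobian_mul_right (F G H : MvPolynomial (Fin 2) R) :
    jacobian F (G * H) = G * jacobian F H + H * jacobian F G := by
  simp only [jacobian, Derivation.leibniz, smul_eq_mul]
  ring

end Jacobian

section Transvectant

variable {k : Type*} [Field k]

theorem transvectant_one (m n : ℕ) (G H : MvPolynomial (Fin 2) k) :
    transvectant m n 1 G H =
      C (((m - 1).factorial * (n - 1).factorial : ℕ) / (m.factorial * n.factorial : ℕ) : k) *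
        jacobian G H := by
  simp [transvectant, jacobian, Finset.sum_range_succ, sub_eq_add_neg]

theorem transvectant_two_two_one (G H : MvPolynomial (Fin 2) k) :
    transvectant 2 2 1 G H = C (1 / 4) * jacobian G H := by
  rw [transvectant_one]
  norm_num [Nat.factorial]

end Transvectant

section LinearForms

variable {k : Type*} [Field k]

@[simp]
theorem pderiv_zero_linForm (u1 u2 : k) : pderiv 0 (linForm u1 u2) = C u1 := by
  simp [linForm]

@[simp]
theorem pderiv_one_linForm (u1 u2 : k) : pderiv 1 (linForm u1 u2) = C u2 := by
  simp [linForm]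

theorem jacobian_linForm (a1 a2 c1 c2 : k) :
    jacobian (linForm a1 a2) (linForm c1 c2) = C (a1 * c2 - a2 * c1) := by
  simp [jacobian]

theorem linForm_syzygy (a1 a2 b1 b2 c1 c2 : k) :
    C (a1 * b2 - a2 * b1) * linForm c1 c2 - C (a1 * c2 - a2 * c1) * linForm b1 b2 +
      C (b1 * c2 - b2 * c1) * linForm a1 a2 = 0 := by
  simp only [linForm, map_sub, map_mul]
  ring

theorem jacobian_linForm_mul_linForm (α1 α2 β1 β2 γ1 γ2 δ1 δ2 : k) :
    jacobian (linForm α1 α2 * linForm β1 β2) (linForm γ1 γ2 * linForm δ1 δ2) =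
      2 * C (α1 * γ2 - α2 * γ1) * (linForm β1 β2 * linForm δ1 δ2) +
        2 * C (β1 * δ2 - β2 * δ1) * (linForm α1 α2 * linForm γ1 γ2) := by
  simp only [jacobian_mul_left, jacobian_mul_right, jacobian_linForm]
  linear_combination linForm α1 α2 * linForm_syzygy β1 β2 γ1 γ2 δ1 δ2
    - linForm β1 β2 * linForm_syzygy α1 α2 γ1 γ2 δ1 δ2

end LinearForms

theorem pascal_stmt_9_general {k : Type*} [Field k]
    (α1 α2 β1 β2 γ1 γ2 δ1 δ2 : k) :
    transvectant 2 2 1 (linForm α1 α2 * linForm β1 β2) (linForm γ1 γ2 * linForm δ1 δ2) =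
      C ((1 / 2) * (α1 * γ2 - α2 * γ1)) * (linForm β1 β2 * linForm δ1 δ2) +
        C ((1 / 2) * (β1 * δ2 - β2 * δ1)) * (linForm α1 α2 * linForm γ1 γ2) := by
  -- In characteristic 2 both `1 / 4` and `1 / 2` are the junk value `0`.
  have hcoef : (C (1 / 4) : MvPolynomial (Fin 2) k) * 2 = C (1 / 2) := by
    rw [← map_ofNat C 2, ← C_mul, show (4 : k) = 2 * 2 by norm_num]
    rcases eq_or_ne (2 : k) 0 with h2 | h2
    · simp [h2]
    · field_simp
  rw [transvectant_two_two_one, jacobian_linForm_mul_linForm, C_mul, C_mul]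
  linear_combination (C (α1 * γ2 - α2 * γ1) * (linForm β1 β2 * linForm δ1 δ2) +
    C (β1 * δ2 - β2 * δ1) * (linForm α1 α2 * linForm γ1 γ2)) * hcoef

/-- For arbitrary linear binary forms `α_x, β_x, γ_x, δ_x` over a field of characteristic
zero, `(α_x·β_x, γ_x·δ_x)_1 = (1/2)·(αγ)·β_x·δ_x + (1/2)·(βδ)·α_x·γ_x`. -/
theorem pascal_stmt_9 {k : Type*} [Field k] [CharZero k]
    (α1 α2 β1 β2 γ1 γ2 δ1 δ2 : k) :
    transvectant 2 2 1 (linForm α1 α2 * linForm β1 β2) (linForm γ1 γ2 * linForm δ1 δ2) =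
      C ((1 / 2) * (α1 * γ2 - α2 * γ1)) * (linForm β1 β2 * linForm δ1 δ2) +
        C ((1 / 2) * (β1 * δ2 - β2 * δ1)) * (linForm α1 α2 * linForm γ1 γ2) :=
  pascal_stmt_9_general α1 α2 β1 β2 γ1 γ2 δ1 δ2
end

section
/- For arbitrary quadratic binary forms U, V, W over a field of characteristic zero, (U, V·W)_2 = (1/2)·(U,V)_2·W + (1/2)·(U,W)_2·V − (1/3)·(V,W)_2·U. -/
/-!
A quadratic binary form is `a x₀² + b x₀x₁ + c x₁²`, and a second transvectant only involves
second partial derivatives, which are constants for quadratics. Writing `U`, `V`, `W` in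
coefficients and expanding the second partials of `V * W` by the Leibniz rule, both sides become
explicit quadratics whose coefficients are polynomials in the nine coefficients of `U`, `V`, `W`,
and the identity is checked by comparing them.
-/

open MvPolynomial

section CommSemiring

variable {R : Type*} [CommSemiring R]

noncomputable def binaryQuadForm (a b c : R) : MvPolynomial (Fin 2) R :=
  C a * X 0 ^ 2 + C b * (X 0 * X 1) + C c * X 1 ^ 2

theorem isHomogeneous_binaryQuadForm (a b c : R) : (binaryQuadForm a b c).IsHomogeneous 2 := by
  unfold binaryQuadForm
  refine .add (.add ?_ ?_) ?_
  · simpa using (isHomogeneous_C _ a).mul ((isHomogeneous_X R 0).pow 2)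
  · simpa using (isHomogeneous_C _ b).mul ((isHomogeneous_X R 0).mul (isHomogeneous_X R 1))
  · simpa using (isHomogeneous_C _ c).mul ((isHomogeneous_X R 1).pow 2)

theorem Finsupp.degree_eq_two_cases {d : Fin 2 →₀ ℕ} (hd : d.degree = 2) :
    d = .single 0 2 ∨ d = .single 0 1 + .single 1 1 ∨ d = .single 1 2 := by
  have hsum : d 0 + d 1 = 2 := by simpa [Finsupp.degree_eq_sum, Fin.sum_univ_two] using hd
  have hd_eq : d = .single 0 (d 0) + .single 1 (d 1) := by
    ext j; fin_cases j <;> simp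
  rw [hd_eq]
  obtain h0 | h0 | h0 : d 0 = 0 ∨ d 0 = 1 ∨ d 0 = 2 := by omega
  all_goals simp [h0, show d 1 = 2 - d 0 by omega]

theorem MvPolynomial.IsHomogeneous.eq_binaryQuadForm {P : MvPolynomial (Fin 2) R}
    (hP : P.IsHomogeneous 2) :
    P = binaryQuadForm (coeff (.single 0 2) P) (coeff (.single 0 1 + .single 1 1) P)
      (coeff (.single 1 2) P) := by
  have hX : (X 0 * X 1 : MvPolynomial (Fin 2) R) = monomial (.single 0 1 + .single 1 1) 1 := by
    rw [X, X, monomial_mul, one_mul]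
  ext d
  by_cases hd : d.degree = 2
  · rcases Finsupp.degree_eq_two_cases hd with rfl | rfl | rfl <;>
      simp [binaryQuadForm, hX, coeff_X_pow, coeff_C_mul, coeff_monomial, Finsupp.ext_iff,
        Fin.forall_fin_two]
  · rw [hP.coeff_eq_zero hd, (isHomogeneous_binaryQuadForm _ _ _).coeff_eq_zero hd]

@[simp] theorem pderiv_zero_binaryQuadForm (a b c : R) :
    pderiv 0 (binaryQuadForm a b c) = C (2 * a) * X 0 + C b * X 1 := by
  simp only [binaryQuadForm, map_add, pderiv_C, pderiv_pow, pderiv_mul, pderiv_X_self,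
    pderiv_X_of_ne (show (1 : Fin 2) ≠ 0 by decide), map_mul, map_ofNat]
  ring

@[simp] theorem pderiv_one_binaryQuadForm (a b c : R) :
    pderiv 1 (binaryQuadForm a b c) = C b * X 0 + C (2 * c) * X 1 := by
  simp only [binaryQuadForm, map_add, pderiv_C, pderiv_pow, pderiv_mul, pderiv_X_self,
    pderiv_X_of_ne (show (0 : Fin 2) ≠ 1 by decide), map_mul, map_ofNat]
  ring

theorem pderiv_zero_pderiv_zero_binaryQuadForm (a b c : R) :
    pderiv 0 (pderiv 0 (binaryQuadForm a b c)) = C (2 * a) := by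
  simp [pderiv_X]

theorem pderiv_zero_pderiv_one_binaryQuadForm (a b c : R) :
    pderiv 0 (pderiv 1 (binaryQuadForm a b c)) = C b := by
  simp [pderiv_X]

theorem pderiv_one_pderiv_one_binaryQuadForm (a b c : R) :
    pderiv 1 (pderiv 1 (binaryQuadForm a b c)) = C (2 * c) := by
  simp [pderiv_X]

end CommSemiring

section Field

variable {k : Type*} [Field k]

theorem transvectant_two (m n : ℕ) (G H : MvPolynomial (Fin 2) k) :
    transvectant m n 2 G H =
      C (((m - 2).factorial * (n - 2).factorial : ℕ) / (m.factorial * n.factorial : ℕ) : k) *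
        (pderiv 0 (pderiv 0 G) * pderiv 1 (pderiv 1 H)
          - 2 * (pderiv 0 (pderiv 1 G) * pderiv 0 (pderiv 1 H))
          + pderiv 1 (pderiv 1 G) * pderiv 0 (pderiv 0 H)) := by
  rw [transvectant]
  congr 1
  simp [Finset.sum_range_succ]
  ring

theorem transvectant_binaryQuadForm_mul_binaryQuadForm [CharZero k] (a b c d e f g h i : k) :
    let U := binaryQuadForm a b c
    let V := binaryQuadForm d e f
    let W := binaryQuadForm g h i
    transvectant 2 4 2 U (V * W) =
      C (1 / 2 : k) * transvectant 2 2 2 U V * W +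
        C (1 / 2 : k) * transvectant 2 2 2 U W * V -
          C (1 / 3 : k) * transvectant 2 2 2 V W * U := by
  intro U V W
  simp only [U, V, W, transvectant_two, pderiv_mul, map_add]
  simp only [pderiv_zero_pderiv_zero_binaryQuadForm, pderiv_zero_pderiv_one_binaryQuadForm,
    pderiv_one_pderiv_one_binaryQuadForm]
  simp only [pderiv_zero_binaryQuadForm, pderiv_one_binaryQuadForm]
  norm_num [Nat.factorial]
  -- `ring` cannot cancel the scalars `C (1 / 24)`, `C (1 / 2)`, … inside the polynomial ring, so we
  -- compare values instead: `k` is infinite, being of characteristic zero.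
  refine MvPolynomial.funext fun x => ?_
  simp only [binaryQuadForm, map_add, map_sub, map_mul, map_pow, eval_C, eval_X, map_ofNat]
  ring

end Field

/-- For arbitrary quadratic binary forms `U, V, W` over a field of characteristic zero,
`(U,V·W)_2 = (1/2)·(U,V)_2·W + (1/2)·(U,W)_2·V − (1/3)·(V,W)_2·U`. -/
theorem pascal_stmt_12 {k : Type*} [Field k] [CharZero k]
    (U V W : MvPolynomial (Fin 2) k)
    (hU : U.IsHomogeneous 2) (hV : V.IsHomogeneous 2) (hW : W.IsHomogeneous 2) :
    transvectant 2 4 2 U (V * W) =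
      C (1 / 2 : k) * transvectant 2 2 2 U V * W +
        C (1 / 2 : k) * transvectant 2 2 2 U W * V -
          C (1 / 3 : k) * transvectant 2 2 2 V W * U := by
  rw [hU.eq_binaryQuadForm, hV.eq_binaryQuadForm, hW.eq_binaryQuadForm]
  exact transvectant_binaryQuadForm_mul_binaryQuadForm _ _ _ _ _ _ _ _ _
end

section
/- For linear binary forms a_x, b_x, c_x, d_x, e_x, f_x over a field of characteristic zero, the following identity holds in the twelve coefficient variables: (cd)·(b_x·f_x, a_x·e_x)_2 + (ae)·(b_x·f_x, c_x·d_x)_2 + (bf)·(c_x·d_x, a_x·e_x)_2 − (1/2)·(ae)(bf)(cd) = (da)(fc)(eb) − (ce)(bd)(af). -/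
open MvPolynomial

/-! A product of two linear forms is a binary quadratic, and the second transvectant of two
quadratics `g0 x1² + 2 g1 x1 x2 + g2 x2²`, `h0 x1² + 2 h1 x1 x2 + h2 x2²` is the constant
`g0 h2 − 2 g1 h1 + g2 h0`. Every transvectant in the identity is therefore a constant, and the
identity becomes a polynomial identity in the twelve coefficients, once the factors `1/2` coming
from the middle coefficients of the products are cleared. -/

theorem Derivation.map_ofNat {R A M : Type*} [CommSemiring R] [CommSemiring A] [AddCommMonoid M]
    [Algebra R A] [Module A M] [Module R M] (D : Derivation R A M) (n : ℕ) [n.AtLeastTwo] :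
    D (no_index (OfNat.ofNat n : A)) = 0 := by
  rw [← Nat.cast_ofNat, D.map_natCast]

noncomputable def quadForm {k : Type*} [Field k] (g0 g1 g2 : k) : MvPolynomial (Fin 2) k :=
  C g0 * X 0 ^ 2 + C (2 * g1) * X 0 * X 1 + C g2 * X 1 ^ 2

lemma linForm_mul_linForm {k : Type*} [Field k] (hk : (2 : k) ≠ 0) (u1 u2 v1 v2 : k) :
    linForm u1 u2 * linForm v1 v2 = quadForm (u1 * v1) ((u1 * v2 + u2 * v1) / 2) (u2 * v2) := by
  simp only [linForm, quadForm, mul_div_cancel₀ _ hk, C_mul, C_add]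
  ring

section quadForm

variable {k : Type*} [Field k] (g0 g1 g2 : k)

lemma pderiv_zero_pderiv_zero_quadForm : pderiv 0 (pderiv 0 (quadForm g0 g1 g2)) = C (2 * g0) := by
  simp [quadForm, C_mul, map_ofNat C 2, mul_comm, Derivation.map_ofNat]

lemma pderiv_zero_pderiv_one_quadForm : pderiv 0 (pderiv 1 (quadForm g0 g1 g2)) = C (2 * g1) := by
  simp [quadForm, C_mul, map_ofNat C 2, mul_comm, Derivation.map_ofNat]

lemma pderiv_one_pderiv_one_quadForm : pderiv 1 (pderiv 1 (quadForm g0 g1 g2)) = C (2 * g2) := by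
  simp [quadForm, C_mul, map_ofNat C 2, mul_comm, Derivation.map_ofNat]

end quadForm

lemma transvectant_two_two_two {k : Type*} [Field k] (G H : MvPolynomial (Fin 2) k) :
    transvectant 2 2 2 G H =
      C (1 / 4) * (pderiv 0 (pderiv 0 G) * pderiv 1 (pderiv 1 H) -
        C 2 * (pderiv 0 (pderiv 1 G) * pderiv 0 (pderiv 1 H)) +
        pderiv 1 (pderiv 1 G) * pderiv 0 (pderiv 0 H)) := by
  simp only [transvectant, Finset.sum_range_succ, Finset.sum_range_zero,
    Function.iterate_succ, Function.iterate_zero, Function.comp_apply, id_eq]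
  norm_num [sub_eq_add_neg]

lemma transvectant_quadForm {k : Type*} [Field k] (hk : (2 : k) ≠ 0) (g0 g1 g2 h0 h1 h2 : k) :
    transvectant 2 2 2 (quadForm g0 g1 g2) (quadForm h0 h1 h2) =
      C (g0 * h2 - 2 * g1 * h1 + g2 * h0) := by
  rw [transvectant_two_two_two, pderiv_zero_pderiv_zero_quadForm, pderiv_zero_pderiv_one_quadForm,
    pderiv_one_pderiv_one_quadForm, pderiv_zero_pderiv_zero_quadForm, pderiv_zero_pderiv_one_quadForm,
    pderiv_one_pderiv_one_quadForm]
  simp only [← C_mul, ← C_sub, ← C_add, C_inj]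
  have h4 : (4 : k) = 2 * 2 := by norm_num
  field_simp [h4]
  ring

/-- For six linear binary forms over a field of characteristic zero,
`(cd)·(b_x·f_x, a_x·e_x)_2 + (ae)·(b_x·f_x, c_x·d_x)_2 + (bf)·(c_x·d_x, a_x·e_x)_2
  − (1/2)·(ae)(bf)(cd) = (da)(fc)(eb) − (ce)(bd)(af)`. -/
theorem pascal_stmt_14 {k : Type*} [Field k] [CharZero k]
    (a1 a2 b1 b2 c1 c2 d1 d2 e1 e2 f1 f2 : k) :
    let ax := linForm a1 a2
    let bx := linForm b1 b2
    let cx := linForm c1 c2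
    let dx := linForm d1 d2
    let ex := linForm e1 e2
    let fx := linForm f1 f2
    C (c1 * d2 - c2 * d1) * transvectant 2 2 2 (bx * fx) (ax * ex) +
        C (a1 * e2 - a2 * e1) * transvectant 2 2 2 (bx * fx) (cx * dx) +
        C (b1 * f2 - b2 * f1) * transvectant 2 2 2 (cx * dx) (ax * ex) -
        C ((1 / 2) * (a1 * e2 - a2 * e1) * (b1 * f2 - b2 * f1) * (c1 * d2 - c2 * d1)) =
      C ((d1 * a2 - d2 * a1) * (f1 * c2 - f2 * c1) * (e1 * b2 - e2 * b1) -
        (c1 * e2 - c2 * e1) * (b1 * d2 - b2 * d1) * (a1 * f2 - a2 * f1)) := by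
  have hk : (2 : k) ≠ 0 := two_ne_zero
  simp only [linForm_mul_linForm hk, transvectant_quadForm hk, ← C_mul, ← C_add, ← C_sub, C_inj]
  field_simp
  ring
end
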